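/- Let d ≥ 1, let b : ℝ^d → ℝ^d and k : ℝ^d → ℝ be continuous with k(x) ≥ 0 for all x, and let U ⊆ ℝ^d be an open, bounded and connected set. Let f be twice continuously differentiable on an open set containing the closure of U. Assume 𝒜f(x) ≥ 0 for every x ∈ U, set M = sup{ f(x) : x ∈ closure of U }, assume M ≥ 0, and assume there exists x₀ ∈ U (an interior point) with f(x₀) = M. Then f(x) = M for every x ∈ U, i.e., f is constant on U. -/

import Mathlib

/-!
Hopf's argument. If `f` attains `M` at some points of `U` but not at others, there is a ball
`B(p, r) ⊆ U` on which `f < M` whose boundary sphere touches the maximum set at a point `y`.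
For large `α` the Gaussian `exp (-α ‖x - p‖²)` satisfies `𝒜 > 0` on the annulus
`r / 2 < ‖x - p‖ < r`, and `k ≥ 0`, `M ≥ 0` keep this strict for `f + ε · exp (-α ‖x - p‖²)`
minus a constant; the weak maximum principle on the annulus then makes `y` a maximum of
`f + ε · exp (-α ‖x - p‖²)` on the closed ball. Differentiating along the inner normal gives
`f'(y) (y - p) > 0`, contradicting `f'(y) = 0` at the interior maximum `y`. Hence `{f = M}` is
open in `U`; so is `{f < M}`, and connectedness concludes.
-/

open MeasureTheory

noncomputable section

/-- Laplacian of `f : ℝ^d → ℝ` at `x`, computed as the trace of the second derivative. -/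
def lap {d : ℕ} (f : EuclideanSpace ℝ (Fin d) → ℝ) (x : EuclideanSpace ℝ (Fin d)) : ℝ :=
  ∑ i, fderiv ℝ (fderiv ℝ f) x (EuclideanSpace.single i 1) (EuclideanSpace.single i 1)

/-- The elliptic generator with killing:
`𝒜 f (x) = (1/2) Δf(x) + ⟨b(x), ∇f(x)⟩ − k(x) f(x)`. -/
def gen {d : ℕ} (b : EuclideanSpace ℝ (Fin d) → EuclideanSpace ℝ (Fin d))
    (k : EuclideanSpace ℝ (Fin d) → ℝ) (f : EuclideanSpace ℝ (Fin d) → ℝ)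
    (x : EuclideanSpace ℝ (Fin d)) : ℝ :=
  (1 / 2) * lap f x + (inner ℝ (b x) (gradient f x) : ℝ) - k x * f x

open Set Filter Topology Laplacian InnerProductSpace Metric Real

theorem IsLocalMax.deriv_deriv_nonpos {g : ℝ → ℝ} {t : ℝ} (hmax : IsLocalMax g t)
    (hg : ContinuousAt g t) : deriv (deriv g) t ≤ 0 := by
  by_contra! hpos
  have hconst : g =ᶠ[𝓝 t] fun _ => g t := by
    filter_upwards [hmax, isLocalMin_of_deriv_deriv_pos hpos hmax.deriv_eq_zero hg]
      with s h₁ h₂ using le_antisymm h₁ h₂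
  rw [hconst.deriv.deriv_eq] at hpos
  simp at hpos

section NormedSpace

variable {E : Type*} [NormedAddCommGroup E]

theorem IsLocalMax.fderiv_fderiv_apply_self_nonpos [NormedSpace ℝ E] {w : E → ℝ} {z : E}
    (hmax : IsLocalMax w z) (hw : ContDiffAt ℝ 2 w z) (v : E) :
    fderiv ℝ (fderiv ℝ w) z v v ≤ 0 := by
  set line : ℝ → E := fun t => z + t • v
  have hline : ∀ t, HasDerivAt line v t := fun t => by
    have : HasDerivAt (fun s : ℝ => s • v) v t := by simpa using (hasDerivAt_id t).smul_const v
    exact this.const_add z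
  have hline0 : line 0 = z := by simp [line]
  have hderiv : deriv (w ∘ line) =ᶠ[𝓝 0] fun t => fderiv ℝ w (line t) v := by
    have hdiff : ∀ᶠ y in 𝓝 z, DifferentiableAt ℝ w y :=
      (hw.eventually (by simp)).mono fun y hy => hy.differentiableAt two_ne_zero
    filter_upwards [(hline0 ▸ (hline 0).continuousAt.tendsto).eventually hdiff] with t ht
    exact (ht.hasFDerivAt.comp_hasDerivAt t (hline t)).deriv
  have hsecond :
      HasDerivAt (fun t => fderiv ℝ w (line t) v) (fderiv ℝ (fderiv ℝ w) z v v) 0 := by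
    have hfd : DifferentiableAt ℝ (fderiv ℝ w) (line 0) :=
      hline0 ▸ (hw.fderiv_right (m := 1) le_rfl).differentiableAt one_ne_zero
    exact (ContinuousLinearMap.apply ℝ ℝ v).hasFDerivAt.comp_hasDerivAt 0
      (hline0 ▸ hfd.hasFDerivAt.comp_hasDerivAt 0 (hline 0))
  rw [← hsecond.deriv, ← hderiv.deriv_eq]
  exact ((hline0 ▸ hmax).comp_continuous (hline 0).continuousAt).deriv_deriv_nonpos
    ((hline0 ▸ hw.continuousAt).comp (hline 0).continuousAt)

def gaussianBump (p : E) (α : ℝ) (x : E) : ℝ := exp (-α * ‖x - p‖ ^ 2)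

theorem gaussianBump_pos (p : E) (α : ℝ) (x : E) : 0 < gaussianBump p α x := exp_pos _

theorem gaussianBump_le_one (p : E) {α : ℝ} (hα : 0 ≤ α) (x : E) : gaussianBump p α x ≤ 1 :=
  exp_le_one_iff.mpr (by nlinarith [sq_nonneg ‖x - p‖])

theorem gaussianBump_of_dist_eq (p : E) (α : ℝ) {r : ℝ} {x : E} (hx : dist x p = r) :
    gaussianBump p α x = exp (-α * r ^ 2) := by
  rw [gaussianBump, ← dist_eq_norm, hx]

end NormedSpace

section InnerProductSpace

variable {E : Type*} [NormedAddCommGroup E] [InnerProductSpace ℝ E]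

theorem IsLocalMax.laplacian_nonpos [FiniteDimensional ℝ E] {w : E → ℝ} {z : E}
    (hmax : IsLocalMax w z) (hw : ContDiffAt ℝ 2 w z) : Δ w z ≤ 0 := by
  rw [laplacian_eq_iteratedFDeriv_stdOrthonormalBasis]
  refine Finset.sum_nonpos fun i _ => ?_
  rw [iteratedFDeriv_two_apply]
  exact hmax.fderiv_fderiv_apply_self_nonpos hw _

variable (p : E) (α : ℝ)

theorem contDiff_gaussianBump {n : WithTop ℕ∞} : ContDiff ℝ n (gaussianBump p α) :=
  contDiff_exp.comp (contDiff_const.mul ((contDiff_id.sub contDiff_const).norm_sq ℝ))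

theorem hasFDerivAt_gaussianBump (x : E) :
    HasFDerivAt (gaussianBump p α) ((-2 * α * gaussianBump p α x) • innerSL ℝ (x - p)) x := by
  refine (((hasFDerivAt_id x).sub_const p).norm_sq.const_mul (-α)).exp.congr_fderiv ?_
  ext v
  simp only [gaussianBump, id_eq, ContinuousLinearMap.comp_id, smul_apply, coe_innerSL_apply,
    nsmul_eq_mul, Nat.cast_ofNat, smul_eq_mul]
  ring

theorem fderiv_fderiv_gaussianBump_apply (x v : E) :
    fderiv ℝ (fderiv ℝ (gaussianBump p α)) x v v
      = (4 * α ^ 2 * inner ℝ (x - p) v ^ 2 - 2 * α * ‖v‖ ^ 2) * gaussianBump p α x := by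
  have hinner : HasFDerivAt (fun y : E => innerSL ℝ (y - p)) (innerSL ℝ) x :=
    ((innerSL ℝ).hasFDerivAt.comp x ((hasFDerivAt_id x).sub_const p)).congr_fderiv
      (ContinuousLinearMap.comp_id _)
  have hsecond : HasFDerivAt (fun y => (-2 * α * gaussianBump p α y) • innerSL ℝ (y - p)) _ x :=
    ((hasFDerivAt_gaussianBump p α x).const_mul (-2 * α)).smul hinner
  rw [funext fun y => (hasFDerivAt_gaussianBump p α y).fderiv, hsecond.fderiv]
  simp only [add_apply, smul_apply, ContinuousLinearMap.smulRight_apply, innerSL_apply_apply,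
    smul_eq_mul]
  rw [innerSL_apply_apply, real_inner_self_eq_norm_sq]
  ring

theorem laplacian_gaussianBump [FiniteDimensional ℝ E] (x : E) :
    Δ (gaussianBump p α) x
      = (4 * α ^ 2 * ‖x - p‖ ^ 2 - 2 * α * Module.finrank ℝ E) * gaussianBump p α x := by
  rw [laplacian_eq_iteratedFDeriv_stdOrthonormalBasis]
  simp only [iteratedFDeriv_two_apply, Matrix.cons_val_zero, Matrix.cons_val_one,
    fderiv_fderiv_gaussianBump_apply, ← Finset.sum_mul, Finset.sum_sub_distrib, ← Finset.mul_sum,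
    OrthonormalBasis.sum_sq_inner_left, OrthonormalBasis.norm_eq_one, one_pow, Finset.sum_const,
    Finset.card_univ, Fintype.card_fin, nsmul_eq_mul, mul_one]
  ring

end InnerProductSpace

theorem exists_touching_ball {X : Type*} [MetricSpace X] [ProperSpace X] {f : X → ℝ} {q p : X}
    {ρ M : ℝ} (hf : ContinuousOn f (ball q ρ)) (hle : ∀ x ∈ ball q ρ, f x ≤ M) (hq : f q = M)
    (hp : dist p q < ρ / 2) (hfp : f p < M) :
    ∃ y r, 0 < r ∧ closedBall p r ⊆ ball q ρ ∧ dist y p = r ∧ f y = M ∧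
      ∀ x ∈ ball p r, f x < M := by
  have hsub : closedBall p (dist p q) ⊆ ball q ρ := fun x hx =>
    mem_ball.mpr (by linarith [mem_closedBall.mp hx, dist_triangle x p q])
  set T := closedBall p (dist p q) ∩ f ⁻¹' {M}
  have hT : IsCompact T := (isCompact_closedBall p _).of_isClosed_subset
    ((hf.mono hsub).preimage_isClosed_of_isClosed isClosed_closedBall isClosed_singleton)
    inter_subset_left
  obtain ⟨y, ⟨hyp, hyM⟩, hmin⟩ := hT.exists_isMinOn ⟨q, (dist_comm q p).le, hq⟩
    (continuous_id.dist continuous_const : Continuous fun x => dist x p).continuousOn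
  have hyp' : closedBall p (dist y p) ⊆ closedBall p (dist p q) := closedBall_subset_closedBall hyp
  refine ⟨y, dist y p, dist_pos.mpr fun h => hfp.ne (h ▸ hyM), hyp'.trans hsub, rfl, hyM,
    fun x hx => (hle x (hsub (hyp' (ball_subset_closedBall hx)))).lt_of_ne fun hxM => ?_⟩
  have hyx : dist y p ≤ dist x p := hmin ⟨hyp' (ball_subset_closedBall hx), hxM⟩
  exact (mem_ball.mp hx).not_ge hyx

section Generator

variable {d : ℕ} {b : EuclideanSpace ℝ (Fin d) → EuclideanSpace ℝ (Fin d)}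
  {k : EuclideanSpace ℝ (Fin d) → ℝ}

local notation "𝔼" => EuclideanSpace ℝ (Fin d)

theorem lap_eq_laplacian (f : 𝔼 → ℝ) (x : 𝔼) : lap f x = Δ f x := by
  simp [lap, laplacian_eq_iteratedFDeriv_orthonormalBasis f (EuclideanSpace.basisFun (Fin d) ℝ),
    iteratedFDeriv_two_apply]

theorem gen_eq_laplacian (f : 𝔼 → ℝ) (x : 𝔼) :
    gen b k f x = 1 / 2 * Δ f x + fderiv ℝ f x (b x) - k x * f x := by
  rw [gen, lap_eq_laplacian, real_inner_comm, inner_gradient_left]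

theorem gen_add_const_mul_sub_const {f g : 𝔼 → ℝ} {z : 𝔼} (hf : ContDiffAt ℝ 2 f z)
    (hg : ContDiffAt ℝ 2 g z) (ε c : ℝ) :
    gen b k (fun x => f x + ε * g x - c) z = gen b k f z + ε * gen b k g z + k z * c := by
  have hderiv : HasFDerivAt (fun x => f x + ε * g x - c) (fderiv ℝ f z + ε • fderiv ℝ g z) z :=
    ((hf.differentiableAt two_ne_zero).hasFDerivAt.add
      ((hg.differentiableAt two_ne_zero).hasFDerivAt.const_mul ε)).sub_const c
  have hfun : (fun x => f x + ε * g x - c) = f + ε • g - fun _ => c := rfl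
  have hlap : Δ (fun x => f x + ε * g x - c) z = Δ f z + ε * Δ g z := by
    have hεg : ContDiffAt ℝ 2 (ε • g) z := hg.const_smul ε
    have hsum : ContDiffAt ℝ 2 (f + ε • g) z := hf.add hεg
    rw [hfun, hsum.laplacian_sub contDiffAt_const, hf.laplacian_add hεg,
      laplacian_smul ε hg, laplacian_const]
    simp
  simp only [gen_eq_laplacian, hlap, hderiv.fderiv, add_apply, smul_apply, smul_eq_mul]
  ring

theorem gen_nonpos_of_isLocalMax {w : 𝔼 → ℝ} {z : 𝔼} (hmax : IsLocalMax w z)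
    (hw : ContDiffAt ℝ 2 w z) (hk : 0 ≤ k z) (hwz : 0 ≤ w z) : gen b k w z ≤ 0 := by
  rw [gen_eq_laplacian, hmax.fderiv_eq_zero, zero_apply]
  nlinarith [hmax.laplacian_nonpos hw, mul_nonneg hk hwz]

theorem nonpos_of_gen_pos {A : Set 𝔼} (hA : IsOpen A) (hAb : Bornology.IsBounded A) {w : 𝔼 → ℝ}
    (hwc : ContinuousOn w (closure A)) (hw : ∀ x ∈ A, ContDiffAt ℝ 2 w x)
    (hk : ∀ x ∈ A, 0 ≤ k x) (hgen : ∀ x ∈ A, 0 < gen b k w x)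
    (hbdry : ∀ x ∈ frontier A, w x ≤ 0) : ∀ x ∈ A, w x ≤ 0 := by
  intro x hx
  by_contra! hpos
  obtain ⟨z, hz, hmax⟩ := hAb.isCompact_closure.exists_isMaxOn ⟨x, subset_closure hx⟩ hwc
  have hwz : 0 < w z := hpos.trans_le (hmax (subset_closure hx))
  have hzA : z ∈ A := by
    by_contra hzA
    exact (hbdry z (hA.frontier_eq ▸ ⟨hz, hzA⟩)).not_gt hwz
  have hloc : IsLocalMax w z := (hmax.on_subset subset_closure).isLocalMax (hA.mem_nhds hzA)
  exact (gen_nonpos_of_isLocalMax hloc (hw z hzA) (hk z hzA) hwz.le).not_gt (hgen z hzA)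

theorem gen_gaussianBump (p : 𝔼) (α : ℝ) (x : 𝔼) :
    gen b k (gaussianBump p α) x
      = (2 * α ^ 2 * ‖x - p‖ ^ 2 - α * d - 2 * α * inner ℝ (x - p) (b x) - k x)
        * gaussianBump p α x := by
  rw [gen_eq_laplacian, laplacian_gaussianBump, (hasFDerivAt_gaussianBump p α x).fderiv,
    finrank_euclideanSpace_fin]
  simp only [smul_apply, innerSL_apply_apply, smul_eq_mul]
  ring

theorem exists_gen_gaussianBump_pos {p : 𝔼} {r : ℝ} (hr : 0 < r)
    (hb : ContinuousOn b (closedBall p r)) (hk : ContinuousOn k (closedBall p r)) :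
    ∃ α > 0, ∀ x ∈ closedBall p r, r / 2 ≤ dist x p → 0 < gen b k (gaussianBump p α) x := by
  obtain ⟨B, hB⟩ := (isCompact_closedBall p r).exists_bound_of_continuousOn hb
  obtain ⟨K, hK⟩ := (isCompact_closedBall p r).exists_bound_of_continuousOn hk
  have hK0 : 0 ≤ K := (norm_nonneg _).trans (hK p (mem_closedBall_self hr.le))
  -- On the annulus the bracket in `gen_gaussianBump` is at least `α (α r² / 2 - d - 2 r B) - K`.
  set α := max 1 (2 * (d + 2 * r * B + K + 1) / r ^ 2)
  have hα1 : 1 ≤ α := le_max_left _ _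
  have hαr : d + 2 * r * B + K + 1 ≤ α * r ^ 2 / 2 := by
    have := le_max_right 1 (2 * (d + 2 * r * B + K + 1) / r ^ 2)
    rw [div_le_iff₀ (by positivity)] at this
    linarith
  refine ⟨α, by linarith, fun x hx hx₂ => ?_⟩
  rw [gen_gaussianBump]
  refine mul_pos ?_ (gaussianBump_pos p α x)
  have hdist : dist x p = ‖x - p‖ := dist_eq_norm x p
  have hQ : r ^ 2 / 4 ≤ ‖x - p‖ ^ 2 := by nlinarith
  have hI : inner ℝ (x - p) (b x) ≤ r * B :=
    (real_inner_le_norm _ _).trans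
      (mul_le_mul (hdist ▸ hx) (hB x hx) (norm_nonneg _) hr.le)
  have hkx : k x ≤ K := (le_abs_self _).trans (hK x hx)
  nlinarith

theorem isMaxOn_add_gaussianBump {f : 𝔼 → ℝ} {p y : 𝔼} {r α ε : ℝ} (hy : dist y p = r)
    (hk0 : ∀ x ∈ closedBall p r, 0 ≤ k x) (hf : ∀ x ∈ closedBall p r, ContDiffAt ℝ 2 f x)
    (hgen : ∀ x ∈ ball p r, 0 ≤ gen b k f x) (hle : ∀ x ∈ closedBall p r, f x ≤ f y)
    (hfy : 0 ≤ f y) (hα : 0 ≤ α) (hε : 0 < ε) (hinner : ∀ x ∈ closedBall p (r / 2), f x + ε ≤ f y)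
    (hbump : ∀ x ∈ closedBall p r, r / 2 ≤ dist x p → 0 < gen b k (gaussianBump p α) x) :
    IsMaxOn (fun x => f x + ε * gaussianBump p α x) (closedBall p r) y := by
  set c := f y + ε * gaussianBump p α y
  set A := ball p r \ closedBall p (r / 2)
  have hA_sub : A ⊆ closedBall p r := sdiff_subset.trans ball_subset_closedBall
  have hshell : ∀ x ∈ closedBall p r, x ∉ A → f x + ε * gaussianBump p α x - c ≤ 0 := by
    intro x hx hxA
    by_cases hx₂ : x ∈ closedBall p (r / 2)
    · nlinarith [hinner x hx₂, gaussianBump_le_one p hα x, gaussianBump_pos p α y]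
    · have hxr : dist x p = r := le_antisymm hx (not_lt.mp fun h => hxA ⟨h, hx₂⟩)
      rw [gaussianBump_of_dist_eq p α hxr, ← gaussianBump_of_dist_eq p α hy]
      linarith [hle x hx]
  have hA_open : IsOpen A := isOpen_ball.sdiff isClosed_closedBall
  have hA_closure : closure A ⊆ closedBall p r := closure_minimal hA_sub isClosed_closedBall
  have hg := contDiff_gaussianBump (n := 2) p α
  have hA : ∀ x ∈ A, f x + ε * gaussianBump p α x - c ≤ 0 := by
    refine nonpos_of_gen_pos (b := b) hA_open (isBounded_ball.subset sdiff_subset) ?_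
      (fun x hx => ((hf x (hA_sub hx)).add (contDiffAt_const.mul hg.contDiffAt)).sub
        contDiffAt_const) (fun x hx => hk0 x (hA_sub hx)) (fun x hx => ?_)
      (fun x hx => hshell x (hA_closure (frontier_subset_closure hx))
        (hA_open.frontier_eq ▸ hx).2)
    · have hfc : ContinuousOn f (closedBall p r) :=
        fun x hx => (hf x hx).continuousAt.continuousWithinAt
      exact ((hfc.add (continuousOn_const.mul hg.continuous.continuousOn)).sub
        continuousOn_const).mono hA_closure
    · rw [gen_add_const_mul_sub_const (hf x (hA_sub hx)) hg.contDiffAt]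
      have hc : 0 ≤ c := add_nonneg hfy (mul_pos hε (gaussianBump_pos p α y)).le
      nlinarith [hgen x hx.1, mul_pos hε (hbump x (hA_sub hx) (not_le.mp hx.2).le),
        mul_nonneg (hk0 x (hA_sub hx)) hc]
  intro x hx
  show f x + ε * gaussianBump p α x ≤ c
  by_cases hxA : x ∈ A
  · linarith [hA x hxA]
  · linarith [hshell x hx hxA]

theorem hopf_lemma {f : 𝔼 → ℝ} {p y : 𝔼} {r : ℝ} (hr : 0 < r)
    (hy : dist y p = r) (hb : ContinuousOn b (closedBall p r))
    (hk : ContinuousOn k (closedBall p r)) (hk0 : ∀ x ∈ closedBall p r, 0 ≤ k x)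
    (hf : ∀ x ∈ closedBall p r, ContDiffAt ℝ 2 f x) (hgen : ∀ x ∈ ball p r, 0 ≤ gen b k f x)
    (hlt : ∀ x ∈ ball p r, f x < f y) (hfy : 0 ≤ f y) :
    0 < fderiv ℝ f y (y - p) := by
  have hfc : ContinuousOn f (closedBall p r) :=
    fun x hx => (hf x hx).continuousAt.continuousWithinAt
  have hle : ∀ x ∈ closedBall p r, f x ≤ f y := closure_ball p hr.ne' ▸
    le_on_closure (fun x hx => (hlt x hx).le) (closure_ball p hr.ne' ▸ hfc) continuousOn_const
  have hinner_sub : closedBall p (r / 2) ⊆ ball p r := closedBall_subset_ball (by linarith)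
  obtain ⟨x₁, hx₁, hmax₁⟩ := (isCompact_closedBall p (r / 2)).exists_isMaxOn
    ⟨p, mem_closedBall_self (by linarith)⟩ (hfc.mono (hinner_sub.trans ball_subset_closedBall))
  obtain ⟨α, hα, hbump⟩ := exists_gen_gaussianBump_pos hr hb hk
  have hε : 0 < f y - f x₁ := sub_pos.mpr (hlt x₁ (hinner_sub hx₁))
  have hmax := isMaxOn_add_gaussianBump hy hk0 hf hgen hle hfy hα.le hε
    (fun x hx => by have : f x ≤ f x₁ := hmax₁ hx; linarith) hbump
  have hy_mem : y ∈ closedBall p r := hy.le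
  have hderiv := ((hf y hy_mem).differentiableAt two_ne_zero).hasFDerivAt.add
    ((hasFDerivAt_gaussianBump p α y).const_mul (f y - f x₁))
  have hcone : p - y ∈ posTangentConeAt (closedBall p r) y :=
    sub_mem_posTangentConeAt_of_segment_subset
      ((convex_closedBall p r).segment_subset hy_mem (mem_closedBall_self hr.le))
  have hnonpos := hmax.localize.hasFDerivWithinAt_nonpos hderiv.hasFDerivWithinAt hcone
  have hinner : inner ℝ (y - p) (p - y) = -r ^ 2 := by
    rw [← neg_sub y p, inner_neg_right, real_inner_self_eq_norm_sq, ← dist_eq_norm, hy]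
  simp only [add_apply, smul_apply, innerSL_apply_apply, smul_eq_mul, hinner] at hnonpos
  rw [← neg_sub p y, map_neg]
  nlinarith [mul_pos (mul_pos hε hα) (mul_pos (gaussianBump_pos p α y) (pow_pos hr 2))]

theorem eventually_eq_of_isMaxOn {f : 𝔼 → ℝ} {U : Set 𝔼} {q : 𝔼} (hU : IsOpen U)
    (hb : ContinuousOn b U) (hk : ContinuousOn k U) (hk0 : ∀ x ∈ U, 0 ≤ k x)
    (hf : ∀ x ∈ U, ContDiffAt ℝ 2 f x) (hgen : ∀ x ∈ U, 0 ≤ gen b k f x) (hq : q ∈ U)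
    (hmax : IsMaxOn f U q) (hq0 : 0 ≤ f q) : ∀ᶠ x in 𝓝 q, f x = f q := by
  obtain ⟨ρ, hρ, hball⟩ := isOpen_iff.mp hU q hq
  filter_upwards [ball_mem_nhds q (half_pos hρ)] with p hp
  by_contra hne
  have hfc : ContinuousOn f (ball q ρ) :=
    fun x hx => (hf x (hball hx)).continuousAt.continuousWithinAt
  obtain ⟨y, r, hr, hsub, hy, hfy, hlt⟩ := exists_touching_ball hfc (fun x hx => hmax (hball hx))
    rfl hp ((hmax (hball (ball_subset_ball (half_le_self hρ.le) hp))).lt_of_ne hne)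
  have hsubU := hsub.trans hball
  have hpos := hopf_lemma hr hy (hb.mono hsubU) (hk.mono hsubU) (fun x hx => hk0 x (hsubU hx))
    (fun x hx => hf x (hsubU hx)) (fun x hx => hgen x (hsubU (ball_subset_closedBall hx)))
    (hfy ▸ hlt) (hfy ▸ hq0)
  have hmax_y : IsMaxOn f U y := fun x hx => show f x ≤ f y from hfy ▸ hmax hx
  rw [(hmax_y.isLocalMax (hU.mem_nhds (hsubU hy.le))).fderiv_eq_zero] at hpos
  simp at hpos

end Generator

theorem strong_maximum_principle {d : ℕ}
    (b : EuclideanSpace ℝ (Fin d) → EuclideanSpace ℝ (Fin d))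
    (k : EuclideanSpace ℝ (Fin d) → ℝ)
    (hb : Continuous b) (hk : Continuous k) (hk0 : ∀ x, 0 ≤ k x)
    (U : Set (EuclideanSpace ℝ (Fin d))) (hU : IsOpen U)
    (hUbdd : Bornology.IsBounded U) (hUconn : IsConnected U)
    (V : Set (EuclideanSpace ℝ (Fin d))) (hV : IsOpen V) (hUV : closure U ⊆ V)
    (f : EuclideanSpace ℝ (Fin d) → ℝ) (hf : ContDiffOn ℝ 2 f V)
    (hA : ∀ x ∈ U, 0 ≤ gen b k f x)
    (M : ℝ) (hM : M = sSup (f '' closure U)) (hM0 : 0 ≤ M)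
    (x₀ : EuclideanSpace ℝ (Fin d)) (hx₀ : x₀ ∈ U) (hfx₀ : f x₀ = M) :
    ∀ x ∈ U, f x = M := by
  have hf₂ : ∀ x ∈ U, ContDiffAt ℝ 2 f x :=
    fun x hx => hf.contDiffAt (hV.mem_nhds (hUV (subset_closure hx)))
  have hfc : ContinuousOn f (closure U) := (hf.continuousOn).mono hUV
  have hle : ∀ x ∈ U, f x ≤ M := fun x hx => hM ▸ le_csSup
    (hUbdd.isCompact_closure.image_of_continuousOn hfc).bddAbove
    (mem_image_of_mem f (subset_closure hx))
  have hS : IsOpen (U ∩ f ⁻¹' {M}) := isOpen_iff_mem_nhds.mpr fun q ⟨hqU, hq⟩ => by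
    have hmax : IsMaxOn f U q := fun x hx => show f x ≤ f q from (hq : f q = M) ▸ hle x hx
    filter_upwards [hU.mem_nhds hqU, eventually_eq_of_isMaxOn hU hb.continuousOn hk.continuousOn
      (fun x _ => hk0 x) hf₂ hA hqU hmax ((hq : f q = M) ▸ hM0)] with x hxU hx
    exact ⟨hxU, hx.trans hq⟩
  have hD : IsOpen (U ∩ f ⁻¹' Iio M) :=
    (hfc.mono subset_closure).isOpen_inter_preimage hU isOpen_Iio
  intro x hx
  by_contra hne
  obtain ⟨z, -, ⟨-, hzM⟩, -, hzlt⟩ := hUconn.isPreconnected _ _ hS hD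
    (fun y hy => (hle y hy).eq_or_lt.imp (⟨hy, ·⟩) (⟨hy, ·⟩)) ⟨x₀, hx₀, hx₀, hfx₀⟩
    ⟨x, hx, hx, (hle x hx).lt_of_ne hne⟩
  exact (hzlt : f z < M).ne hzM
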